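/- Lemma 5.4 (monotonicity of the one-boundary interface energy). For the East model and for the FA-1f model with one empty (right) boundary at density ρ∈(0,1), and for every integer L≥1: Σ_L ≥ 0 and Σ_{L+1} ≤ Σ_L. Consequently the limit Σ = lim_{L→∞} Σ_L exists. -/
import Mathlib


open Finset Filter

open scoped Classical

/-- A configuration on the box `{1,…,N}` (0-indexed by `Fin N`). -/
abbrev Config (N : ℕ) := Fin N → Bool

/-- Occupation variable `η_i ∈ {0,1}` as a real number. -/
noncomputable def occ {N : ℕ} (η : Config N) (i : Fin N) : ℝ := if η i then 1 else 0

/-- Bernoulli(ρ) product weight of a configuration. -/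
noncomputable def bern (ρ : ℝ) {N : ℕ} (η : Config N) : ℝ :=
  ∏ i, (if η i then ρ else 1 - ρ)

/-- Expectation under the Bernoulli(ρ) product measure `ν`. -/
noncomputable def expect (ρ : ℝ) {N : ℕ} (f : Config N → ℝ) : ℝ :=
  ∑ η : Config N, bern ρ η * f η

/-- The configuration `η^i`, obtained by flipping `η` at site `i`. -/
def flipAt {N : ℕ} (η : Config N) (i : Fin N) : Config N :=
  Function.update η i (!η i)

/-- Occupation at the 1-indexed position `k ∈ {0,…,N+1}`, with boundary value
`bl` at `k = 0` and `br` at `k = N+1` (and beyond). -/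
noncomputable def occAt {N : ℕ} (η : Config N) (bl br : ℝ) (k : ℕ) : ℝ :=
  if hk : k = 0 then bl
  else if h : k ≤ N then (if η ⟨k - 1, by omega⟩ then 1 else 0) else br

/-- The three kinetically constrained models considered: East (empty right boundary),
FA-1f with two empty boundaries, FA-1f with one empty (right) boundary. -/
inductive KCM | east | fa2 | fa1

/-- The kinetic constraint `r_i(η)` of each model, at the (0-indexed) site `i`. -/
noncomputable def constr (m : KCM) {N : ℕ} (η : Config N) (i : Fin N) : ℝ :=
  match m with
  | KCM.east => 1 - occAt η 0 0 (i.1 + 2)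
  | KCM.fa2  => 1 - occAt η 0 0 i.1 * occAt η 0 0 (i.1 + 2)
  | KCM.fa1  => 1 - occAt η 1 0 i.1 * occAt η 1 0 (i.1 + 2)

/-- The jump rate `c_i(η) = r_i(η)·[η_i(1−ρ)+(1−η_i)ρ]`. -/
noncomputable def crate (m : KCM) (ρ : ℝ) {N : ℕ} (η : Config N) (i : Fin N) : ℝ :=
  constr m η i * (if η i then 1 - ρ else ρ)

/-- The escape rate `𝓗(η) = Σ_i c_i(η)`. -/
noncomputable def escRate (m : KCM) (ρ : ℝ) {N : ℕ} (η : Config N) : ℝ :=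
  ∑ i, crate m ρ η i

/-- The Dirichlet form `𝒟_N(g) = Σ_i ν(c_i(η)(g(η^i)−g(η))²)`. -/
noncomputable def dirichlet (m : KCM) (ρ : ℝ) {N : ℕ} (g : Config N → ℝ) : ℝ :=
  ∑ i, expect ρ (fun η => crate m ρ η i * (g (flipAt η i) - g η) ^ 2)

/-- The rescaled cumulant generating function `φ^{(N)}(λ)`, via the
Donsker–Varadhan variational (principal eigenvalue) formula. -/
noncomputable def phi (m : KCM) (ρ : ℝ) (N : ℕ) (lam : ℝ) : ℝ :=
  sSup { x | ∃ f : Config N → ℝ, (∀ η, 0 ≤ f η) ∧ expect ρ f = 1 ∧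
    x = (Real.exp lam - 1) * expect ρ (fun η => f η * escRate m ρ η)
        - Real.exp lam * dirichlet m ρ (fun η => Real.sqrt (f η)) }

/-- The mean instantaneous activity `𝔸 = ν(c_j)` at an interior site `j`:
`2ρ(1−ρ)²` for East and `2ρ(1−ρ)(1−ρ²)` for FA-1f. -/
noncomputable def meanAct (m : KCM) (ρ : ℝ) : ℝ :=
  match m with
  | KCM.east => 2 * ρ * (1 - ρ) ^ 2
  | _ => 2 * ρ * (1 - ρ) * (1 - ρ ^ 2)

/-- The two-boundary interface energy `Σ_{L,L'}` for FA-1f with two empty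
boundaries: the infimum of `𝒟_{L+L'+2}(√f)` over probability densities `f`
with `ν(f·η_{L+1}η_{L+2}) = 1`. -/
noncomputable def SigmaTwo (ρ : ℝ) (L L' : ℕ) : ℝ :=
  sInf { x | ∃ f : Config (L + L' + 2) → ℝ, (∀ η, 0 ≤ f η) ∧ expect ρ f = 1 ∧
    expect ρ (fun η => f η * occ η ⟨L, by omega⟩ * occ η ⟨L + 1, by omega⟩) = 1 ∧
    x = dirichlet KCM.fa2 ρ (fun η => Real.sqrt (f η)) }

/-- The one-boundary interface energy `Σ_L`: the infimum of `𝒟_L(√f)`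
over probability densities `f` with `ν(f·η_1) = 1`, for the model `m`. -/
noncomputable def SigmaOne (m : KCM) (ρ : ℝ) (L : ℕ) : ℝ :=
  sInf { x | ∃ f : Config L → ℝ, (∀ η, 0 ≤ f η) ∧ expect ρ f = 1 ∧
    expect ρ (fun η => f η * occAt η 0 0 1) = 1 ∧
    x = dirichlet m ρ (fun η => Real.sqrt (f η)) }

section Aux

variable {ρ : ℝ}

lemma bern_nonneg (hρ0 : 0 < ρ) (hρ1 : ρ < 1) {N : ℕ} (η : Config N) : 0 ≤ bern ρ η :=
  Finset.prod_nonneg fun i _ => by split <;> linarith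

lemma expect_mono (hρ0 : 0 < ρ) (hρ1 : ρ < 1) {N : ℕ} {F G : Config N → ℝ}
    (h : ∀ η, F η ≤ G η) : _root_.expect ρ F ≤ _root_.expect ρ G :=
  Finset.sum_le_sum fun η _ => mul_le_mul_of_nonneg_left (h η) (bern_nonneg hρ0 hρ1 η)

lemma expect_nonneg (hρ0 : 0 < ρ) (hρ1 : ρ < 1) {N : ℕ} {F : Config N → ℝ}
    (h : ∀ η, 0 ≤ F η) : 0 ≤ _root_.expect ρ F :=
  Finset.sum_nonneg fun η _ => mul_nonneg (bern_nonneg hρ0 hρ1 η) (h η)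

lemma bern_snoc {L : ℕ} (η : Config L) (b : Bool) :
    bern ρ (Fin.snoc η b) = bern ρ η * (if b then ρ else 1 - ρ) := by
  unfold bern
  rw [Fin.prod_univ_castSucc]
  simp

lemma expect_comp_init {L : ℕ} (F : Config L → ℝ) :
    _root_.expect ρ (fun η : Config (L + 1) => F (Fin.init η)) = _root_.expect ρ F := by
  unfold _root_.expect
  rw [← Equiv.sum_comp (Fin.snocEquiv (fun _ => Bool))]
  rw [Fintype.sum_prod_type, Fintype.sum_bool]
  have e : ∀ (b : Bool) (η : Config L),
      (Fin.snocEquiv (fun _ => Bool)) (b, η) = Fin.snoc η b := fun _ _ => rfl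
  simp only [e, Fin.init_snoc, bern_snoc, if_true, if_false]
  rw [← Finset.sum_add_distrib]
  refine Finset.sum_congr rfl fun η _ => by
    simp only [Bool.false_eq_true, if_false]
    ring

lemma occAt_init {L : ℕ} (η : Config (L + 1)) (bl br : ℝ) {k : ℕ} (hk : k ≤ L) :
    occAt (Fin.init η) bl br k = occAt η bl br k := by
  unfold occAt
  rcases eq_or_ne k 0 with h | h
  · simp [h]
  · rw [dif_neg h, dif_neg h, dif_pos hk, dif_pos (by omega : k ≤ L + 1)]
    rfl

lemma occAt_nonneg {N : ℕ} (η : Config N) {bl : ℝ} (h0 : 0 ≤ bl) (k : ℕ) :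
    0 ≤ occAt η bl 0 k := by
  unfold occAt
  split_ifs <;> norm_num [h0]

lemma occAt_le_one {N : ℕ} (η : Config N) {bl : ℝ} (h1 : bl ≤ 1) (k : ℕ) :
    occAt η bl 0 k ≤ 1 := by
  unfold occAt
  split_ifs <;> norm_num [h1]

lemma occAt_init_le {L : ℕ} (η : Config (L + 1)) {bl : ℝ} (h0 : 0 ≤ bl) (k : ℕ) :
    occAt (Fin.init η) bl 0 k ≤ occAt η bl 0 k := by
  rcases le_or_gt k L with hk | hk
  · rw [occAt_init η bl 0 hk]
  · have hz : occAt (Fin.init η) bl 0 k = 0 := by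
      unfold occAt
      rw [dif_neg (by omega), dif_neg (by omega)]
    rw [hz]
    exact occAt_nonneg η h0 k

lemma constr_nonneg (m : KCM) {N : ℕ} (η : Config N) (i : Fin N) :
    0 ≤ constr m η i := by
  cases m
  · show 0 ≤ 1 - occAt η 0 0 (i.1 + 2)
    have := occAt_le_one η (bl := 0) (by norm_num) (i.1 + 2)
    linarith
  · show 0 ≤ 1 - occAt η 0 0 i.1 * occAt η 0 0 (i.1 + 2)
    nlinarith [occAt_le_one η (bl := (0:ℝ)) (by norm_num) i.1,
      occAt_le_one η (bl := (0:ℝ)) (by norm_num) (i.1 + 2),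
      occAt_nonneg η (bl := (0:ℝ)) (by norm_num) i.1,
      occAt_nonneg η (bl := (0:ℝ)) (by norm_num) (i.1 + 2)]
  · show 0 ≤ 1 - occAt η 1 0 i.1 * occAt η 1 0 (i.1 + 2)
    nlinarith [occAt_le_one η (bl := (1:ℝ)) (by norm_num) i.1,
      occAt_le_one η (bl := (1:ℝ)) (by norm_num) (i.1 + 2),
      occAt_nonneg η (bl := (1:ℝ)) (by norm_num) i.1,
      occAt_nonneg η (bl := (1:ℝ)) (by norm_num) (i.1 + 2)]

lemma constr_init_le (m : KCM) (hm : m = KCM.east ∨ m = KCM.fa1) {L : ℕ}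
    (η : Config (L + 1)) (j : Fin L) :
    constr m η j.castSucc ≤ constr m (Fin.init η) j := by
  rcases hm with rfl | rfl
  · show 1 - occAt η 0 0 (j.1 + 2) ≤ 1 - occAt (Fin.init η) 0 0 (j.1 + 2)
    have := occAt_init_le η (bl := (0:ℝ)) le_rfl (j.1 + 2)
    linarith
  · show 1 - occAt η 1 0 j.1 * occAt η 1 0 (j.1 + 2)
        ≤ 1 - occAt (Fin.init η) 1 0 j.1 * occAt (Fin.init η) 1 0 (j.1 + 2)
    have h1 := occAt_init_le η (bl := (1:ℝ)) (by norm_num) j.1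
    have h2 := occAt_init_le η (bl := (1:ℝ)) (by norm_num) (j.1 + 2)
    have h3 := occAt_nonneg (Fin.init η) (bl := (1:ℝ)) (by norm_num) j.1
    have h4 := occAt_nonneg (Fin.init η) (bl := (1:ℝ)) (by norm_num) (j.1 + 2)
    have h5 := occAt_nonneg η (bl := (1:ℝ)) (by norm_num) j.1
    nlinarith

lemma crate_nonneg (hρ0 : 0 < ρ) (hρ1 : ρ < 1) (m : KCM) {N : ℕ}
    (η : Config N) (i : Fin N) : 0 ≤ crate m ρ η i := by
  refine mul_nonneg (constr_nonneg m η i) ?_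
  split <;> linarith

lemma crate_init_le (hρ0 : 0 < ρ) (hρ1 : ρ < 1) (m : KCM)
    (hm : m = KCM.east ∨ m = KCM.fa1) {L : ℕ} (η : Config (L + 1)) (j : Fin L) :
    crate m ρ η j.castSucc ≤ crate m ρ (Fin.init η) j := by
  unfold crate
  have hval : Fin.init η j = η j.castSucc := rfl
  rw [hval]
  refine mul_le_mul_of_nonneg_right (constr_init_le m hm η j) ?_
  split <;> linarith

lemma dirichlet_nonneg (hρ0 : 0 < ρ) (hρ1 : ρ < 1) (m : KCM) {N : ℕ}
    (g : Config N → ℝ) : 0 ≤ dirichlet m ρ g :=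
  Finset.sum_nonneg fun i _ => expect_nonneg hρ0 hρ1 fun η =>
    mul_nonneg (crate_nonneg hρ0 hρ1 m η i) (sq_nonneg _)

lemma dirichlet_init_le (hρ0 : 0 < ρ) (hρ1 : ρ < 1) (m : KCM)
    (hm : m = KCM.east ∨ m = KCM.fa1) {L : ℕ} (g : Config L → ℝ) :
    dirichlet m ρ (fun η : Config (L + 1) => g (Fin.init η)) ≤ dirichlet m ρ g := by
  unfold dirichlet
  rw [Fin.sum_univ_castSucc]
  have hlast : _root_.expect ρ (fun η : Config (L + 1) => crate m ρ η (Fin.last L) *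
      (g (Fin.init (flipAt η (Fin.last L))) - g (Fin.init η)) ^ 2) = 0 := by
    have hfl : ∀ η : Config (L + 1), Fin.init (flipAt η (Fin.last L)) = Fin.init η := by
      intro η
      unfold flipAt
      exact Fin.init_update_last η _
    have : (fun η : Config (L + 1) => crate m ρ η (Fin.last L) *
        (g (Fin.init (flipAt η (Fin.last L))) - g (Fin.init η)) ^ 2)
        = fun _ => (0 : ℝ) := by
      funext η
      rw [hfl η, sub_self]
      ring
    rw [this]
    simp [_root_.expect]
  have hterm : ∀ j : Fin L,
      _root_.expect ρ (fun η : Config (L + 1) => crate m ρ η j.castSucc *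
        (g (Fin.init (flipAt η j.castSucc)) - g (Fin.init η)) ^ 2)
      ≤ _root_.expect ρ (fun η : Config L => crate m ρ η j * (g (flipAt η j) - g η) ^ 2) := by
    intro j
    rw [← expect_comp_init (ρ := ρ)
      (fun η : Config L => crate m ρ η j * (g (flipAt η j) - g η) ^ 2)]
    refine expect_mono hρ0 hρ1 fun η => ?_
    have hflip : Fin.init (flipAt η j.castSucc) = flipAt (Fin.init η) j := by
      unfold flipAt
      rw [Fin.init_update_castSucc]
      rfl
    rw [hflip]
    exact mul_le_mul_of_nonneg_right (crate_init_le hρ0 hρ1 m hm η j) (sq_nonneg _)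
  calc (∑ j : Fin L, _root_.expect ρ (fun η : Config (L + 1) => crate m ρ η j.castSucc *
          (g (Fin.init (flipAt η j.castSucc)) - g (Fin.init η)) ^ 2))
        + _root_.expect ρ (fun η : Config (L + 1) => crate m ρ η (Fin.last L) *
          (g (Fin.init (flipAt η (Fin.last L))) - g (Fin.init η)) ^ 2)
      ≤ (∑ j : Fin L, _root_.expect ρ (fun η : Config L =>
          crate m ρ η j * (g (flipAt η j) - g η) ^ 2)) + 0 :=
        add_le_add (Finset.sum_le_sum fun j _ => hterm j) (le_of_eq hlast)
    _ = ∑ j : Fin L, _root_.expect ρ (fun η : Config L =>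
          crate m ρ η j * (g (flipAt η j) - g η) ^ 2) := add_zero _

lemma expect_f0 (hρ0 : 0 < ρ) :
    ∀ K : ℕ, _root_.expect ρ (fun η : Config (K + 1) => if η 0 then ρ⁻¹ else 0) = 1 := by
  intro K
  induction K with
  | zero =>
    unfold _root_.expect
    rw [← Equiv.sum_comp (Equiv.funUnique (Fin 1) Bool).symm]
    rw [Fintype.sum_bool]
    simp [bern, mul_inv_cancel₀ hρ0.ne']
  | succ K ih =>
    have heq : (fun η : Config (K + 1 + 1) => if η 0 then ρ⁻¹ else 0)
        = fun η : Config (K + 1 + 1) =>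
            (fun η' : Config (K + 1) => if η' 0 then ρ⁻¹ else 0) (Fin.init η) := by
      funext η
      show (if η 0 then ρ⁻¹ else 0) = (if Fin.init η 0 then ρ⁻¹ else 0)
      have h : Fin.init η 0 = η 0 := by
        show η (Fin.castSucc 0) = η 0
        rw [Fin.castSucc_zero]
      rw [h]
    rw [heq]
    exact (expect_comp_init (fun η' : Config (K + 1) =>
      if η' 0 then ρ⁻¹ else 0)).trans ih

lemma f0_occ {K : ℕ} :
    (fun η : Config (K + 1) => (if η 0 then ρ⁻¹ else 0) * occAt η 0 0 1)
      = fun η : Config (K + 1) => if η 0 then ρ⁻¹ else 0 := by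
  funext η
  unfold occAt
  rw [dif_neg one_ne_zero, dif_pos (by omega : 1 ≤ K + 1)]
  have hidx : (⟨1 - 1, by omega⟩ : Fin (K + 1)) = 0 := by
    ext
    simp
  rw [hidx]
  by_cases h : η 0 <;> simp [h]

lemma witness_mem (hρ0 : 0 < ρ) (hρ1 : ρ < 1) (m : KCM) (K : ℕ) :
    dirichlet m ρ
        (fun η : Config (K + 1) => Real.sqrt (if η 0 then ρ⁻¹ else 0)) ∈
      { x | ∃ f : Config (K + 1) → ℝ, (∀ η, 0 ≤ f η) ∧ _root_.expect ρ f = 1 ∧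
        _root_.expect ρ (fun η => f η * occAt η 0 0 1) = 1 ∧
        x = dirichlet m ρ (fun η => Real.sqrt (f η)) } := by
  refine ⟨fun η => if η 0 then ρ⁻¹ else 0, fun η => ?_, expect_f0 hρ0 K, ?_, rfl⟩
  · dsimp only
    split <;> positivity
  · rw [f0_occ, expect_f0 hρ0 K]

end Aux

/-- **Lemma 5.4** (monotonicity of the one-boundary interface energy). For the
East model and the FA-1f model with one empty (right) boundary at density
`ρ ∈ (0,1)`, and every integer `L ≥ 1`: `Σ_L ≥ 0` and `Σ_{L+1} ≤ Σ_L`.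
Consequently the limit `Σ = lim_L Σ_L` exists. -/
theorem sigmaOne_monotone (ρ : ℝ) (hρ0 : 0 < ρ) (hρ1 : ρ < 1) :
    ∀ m : KCM, m = KCM.east ∨ m = KCM.fa1 →
      (∀ L : ℕ, 1 ≤ L →
        0 ≤ SigmaOne m ρ L ∧ SigmaOne m ρ (L + 1) ≤ SigmaOne m ρ L) ∧
      ∃ Sg : ℝ, Filter.Tendsto (fun L : ℕ => SigmaOne m ρ L) Filter.atTop (nhds Sg) := by
  intro m hm
  have key : ∀ L : ℕ, 1 ≤ L →
      0 ≤ SigmaOne m ρ L ∧ SigmaOne m ρ (L + 1) ≤ SigmaOne m ρ L := by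
    intro L hL
    obtain ⟨K, rfl⟩ : ∃ K, L = K + 1 := ⟨L - 1, by omega⟩
    constructor
    · apply Real.sInf_nonneg
      rintro x ⟨f, hf0, -, -, rfl⟩
      exact dirichlet_nonneg hρ0 hρ1 m _
    · unfold SigmaOne
      refine le_csInf ⟨_, witness_mem hρ0 hρ1 m K⟩ ?_
      rintro x ⟨f, hf0, hf1, hf2, rfl⟩
      have hmem : dirichlet m ρ
          (fun η : Config (K + 1 + 1) => Real.sqrt (f (Fin.init η))) ∈
          { x | ∃ f' : Config (K + 1 + 1) → ℝ, (∀ η, 0 ≤ f' η) ∧ _root_.expect ρ f' = 1 ∧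
            _root_.expect ρ (fun η => f' η * occAt η 0 0 1) = 1 ∧
            x = dirichlet m ρ (fun η => Real.sqrt (f' η)) } := by
        refine ⟨fun η => f (Fin.init η), fun η => hf0 _, ?_, ?_, rfl⟩
        · rw [expect_comp_init, hf1]
        · have heq : (fun η : Config (K + 1 + 1) => f (Fin.init η) * occAt η 0 0 1)
              = fun η : Config (K + 1 + 1) =>
                  (fun η' : Config (K + 1) => f η' * occAt η' 0 0 1) (Fin.init η) := by
            funext η
            show f (Fin.init η) * occAt η 0 0 1
                = f (Fin.init η) * occAt (Fin.init η) 0 0 1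
            rw [occAt_init η 0 0 (by omega : 1 ≤ K + 1)]
          rw [heq]
          exact (expect_comp_init (fun η' : Config (K + 1) =>
            f η' * occAt η' 0 0 1)).trans hf2
      have hbdd : BddBelow { x | ∃ f' : Config (K + 1 + 1) → ℝ, (∀ η, 0 ≤ f' η) ∧
          _root_.expect ρ f' = 1 ∧ _root_.expect ρ (fun η => f' η * occAt η 0 0 1) = 1 ∧
          x = dirichlet m ρ (fun η => Real.sqrt (f' η)) } := by
        refine ⟨0, ?_⟩
        rintro y ⟨f', -, -, -, rfl⟩
        exact dirichlet_nonneg hρ0 hρ1 m _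
      calc sInf { x | ∃ f' : Config (K + 1 + 1) → ℝ, (∀ η, 0 ≤ f' η) ∧
            _root_.expect ρ f' = 1 ∧ _root_.expect ρ (fun η => f' η * occAt η 0 0 1) = 1 ∧
            x = dirichlet m ρ (fun η => Real.sqrt (f' η)) }
          ≤ dirichlet m ρ (fun η : Config (K + 1 + 1) => Real.sqrt (f (Fin.init η))) :=
            csInf_le hbdd hmem
        _ ≤ dirichlet m ρ (fun η : Config (K + 1) => Real.sqrt (f η)) :=
            dirichlet_init_le hρ0 hρ1 m hm (fun η : Config (K + 1) => Real.sqrt (f η))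
  refine ⟨key, ?_⟩
  set g : ℕ → ℝ := fun n => SigmaOne m ρ (n + 1) with hg
  have hant : Antitone g := antitone_nat_of_succ_le fun n => (key (n + 1) (by omega)).2
  have hbdd : BddBelow (Set.range g) := by
    refine ⟨0, ?_⟩
    rintro x ⟨n, rfl⟩
    exact (key (n + 1) (by omega)).1
  exact ⟨⨅ n, g n, (tendsto_add_atTop_iff_nat 1).1 (tendsto_atTop_ciInf hant hbdd)⟩
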